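/- arXiv:1805.03808 — 4 statements merged into one kernel-verified Lean document; each statement's English description precedes it below -/
import Mathlib

section
/- The cross product on Im(O) ≅ ℝ^7 defined by B(u,v) = Im(u·v), where · is octonion multiplication, is a 2-fold vector cross product: it is alternating bilinear, satisfies g(B(u,v),u) = 0, and |B(u,v)|^2 = |u|^2|v|^2 - g(u,v)^2 for all imaginary octonions u,v. -/
open RealInnerProductSpace

/-- The cross product on `Im(𝕆) ≅ ℝ⁷` defined by `B(u,v) = Im(u·v)` (octonion
multiplication) is a 2-fold vector cross product: alternating bilinear, with
`g(B(u,v),u) = 0` and `‖B(u,v)‖² = ‖u‖²‖v‖² - g(u,v)²` for imaginary octonions `u, v`.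

The octonions are encoded as an 8-dimensional real inner product space `O` with a
bilinear multiplication `mul`, a two-sided unit `one` of norm one, whose norm is
multiplicative (`‖x·y‖ = ‖x‖‖y‖`); imaginary octonions are the elements orthogonal
to `one`, and for imaginary `u, v` one has `Im(u·v) = u·v + ⟪u,v⟫·1` (since the real
part of `u·v` is `-⟪u,v⟫`). -/
theorem stmt3 {O : Type*} [NormedAddCommGroup O] [InnerProductSpace ℝ O]
    [FiniteDimensional ℝ O] (hdim : Module.finrank ℝ O = 8)
    (mul : O →ₗ[ℝ] O →ₗ[ℝ] O) (one : O)
    (hone : ‖one‖ = 1)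
    (hunitl : ∀ x : O, mul one x = x) (hunitr : ∀ x : O, mul x one = x)
    (hcomp : ∀ x y : O, ‖mul x y‖ = ‖x‖ * ‖y‖)
    -- the cross product `B(u,v) = Im(u·v) = u·v + ⟪u,v⟫·1` on imaginary octonions
    (B : O → O → O)
    (hB : ∀ u v : O, ⟪u, one⟫ = 0 → ⟪v, one⟫ = 0 →
      B u v = mul u v + ⟪u, v⟫ • one) :
    -- `B` maps imaginary octonions to imaginary octonions
    (∀ u v : O, ⟪u, one⟫ = 0 → ⟪v, one⟫ = 0 → ⟪B u v, one⟫ = 0) ∧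
    -- alternating
    (∀ u : O, ⟪u, one⟫ = 0 → B u u = 0) ∧
    -- orthogonality
    (∀ u v : O, ⟪u, one⟫ = 0 → ⟪v, one⟫ = 0 → ⟪B u v, u⟫ = 0) ∧
    -- norm condition
    (∀ u v : O, ⟪u, one⟫ = 0 → ⟪v, one⟫ = 0 →
      ‖B u v‖ ^ 2 = ‖u‖ ^ 2 * ‖v‖ ^ 2 - ⟪u, v⟫ ^ 2) := by
  -- squared composition law
  have hcomp2 : ∀ x y : O, ‖mul x y‖ ^ 2 = ‖x‖ ^ 2 * ‖y‖ ^ 2 := by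
    intro x y; rw [hcomp, mul_pow]
  -- left polarization
  have polL : ∀ x y z : O, ⟪mul x y, mul x z⟫ = ‖x‖ ^ 2 * ⟪y, z⟫ := by
    intro x y z
    have e1 : mul x (y + z) = mul x y + mul x z := map_add _ _ _
    have e2 := norm_add_sq_real (mul x y) (mul x z)
    have e3 := norm_add_sq_real y z
    have key : ‖mul x y + mul x z‖ ^ 2 = ‖x‖ ^ 2 * ‖y + z‖ ^ 2 := by
      rw [← e1, hcomp2]
    rw [e2, e3] at key
    have h1 := hcomp2 x y
    have h2 := hcomp2 x z
    nlinarith [key, h1, h2]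
  -- right polarization
  have polR : ∀ x y z : O, ⟪mul y x, mul z x⟫ = ‖x‖ ^ 2 * ⟪y, z⟫ := by
    intro x y z
    have e1 : mul (y + z) x = mul y x + mul z x := by
      rw [map_add]; rfl
    have e2 := norm_add_sq_real (mul y x) (mul z x)
    have e3 := norm_add_sq_real y z
    have key : ‖mul y x + mul z x‖ ^ 2 = ‖x‖ ^ 2 * ‖y + z‖ ^ 2 := by
      rw [← e1, hcomp2, mul_comm]
    rw [e2, e3] at key
    have h1 := hcomp2 y x
    have h2 := hcomp2 z x
    nlinarith [key, h1, h2]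
  -- exchange identity
  have exch : ∀ x y z w : O,
      ⟪mul x y, mul z w⟫ + ⟪mul z y, mul x w⟫ = 2 * ⟪x, z⟫ * ⟪y, w⟫ := by
    intro x y z w
    have h := polL (x + z) y w
    have e1 : mul (x + z) y = mul x y + mul z y := by rw [map_add]; rfl
    have e2 : mul (x + z) w = mul x w + mul z w := by rw [map_add]; rfl
    rw [e1, e2, inner_add_left, inner_add_right, inner_add_right,
      norm_add_sq_real] at h
    have h1 := polL x y w
    have h2 := polL z y w
    nlinarith [h, h1, h2]
  -- for imaginary u, v : ⟪mul u v, one⟫ = -⟪u, v⟫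
  have him : ∀ u v : O, ⟪u, one⟫ = 0 → ⟪v, one⟫ = 0 →
      ⟪mul u v, one⟫ = -⟪u, v⟫ := by
    intro u v hu hv
    have h := exch u v one one
    rw [hunitl, hunitr, hunitl] at h
    have hvu : ⟪v, u⟫ = ⟪u, v⟫ := real_inner_comm u v
    linarith [h, hvu.symm, mul_eq_zero_of_left (mul_eq_zero_of_left hu (2:ℝ)) ⟪v, one⟫]
  refine ⟨?_, ?_, ?_, ?_⟩
  · intro u v hu hv
    rw [hB u v hu hv, inner_add_left, him u v hu hv, real_inner_smul_left,
      real_inner_self_eq_norm_sq, hone]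
    ring
  · intro u hu
    rw [hB u u hu hu]
    have key : mul u u = -(⟪u, u⟫ • one) := by
      apply ext_inner_right ℝ
      intro w
      have h := exch u u w one
      rw [hunitr, hunitr] at h
      have h2 := polR u w one
      rw [hunitl] at h2
      have hw1 : ⟪w, one⟫ = ⟪one, w⟫ := real_inner_comm one w
      rw [inner_neg_left, real_inner_smul_left, real_inner_self_eq_norm_sq]
      rw [hw1] at h2
      rw [hu, mul_zero] at h
      linarith [h, h2]
    rw [key, neg_add_cancel]
  · intro u v hu hv
    rw [hB u v hu hv, inner_add_left, real_inner_smul_left]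
    have h := polL u v one
    rw [hunitr] at h
    have h2 : ⟪one, u⟫ = 0 := by rw [real_inner_comm]; exact hu
    rw [hv] at h
    rw [h, h2]; ring
  · intro u v hu hv
    rw [hB u v hu hv, norm_add_sq_real, hcomp2, real_inner_smul_right,
      him u v hu hv, norm_smul, hone]
    simp [Real.norm_eq_abs, mul_pow, sq_abs]
    ring
end

section
/- A manifold with a nearly G₂ structure with torsion scalar τ₀ is Einstein with Ricci curvature R_{jk} = (3/8)τ₀² g_{jk}, and its scalar curvature equals (21/8)τ₀². -/
/-- A manifold with a nearly G₂ structure with torsion scalar `τ₀` is Einstein with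
`R_{jk} = (3/8) τ₀² g_{jk}`, and its scalar curvature equals `(21/8) τ₀²`.

The computation is carried out in an orthonormal frame (`g_{ij} = δ_{ij}`) at a
point, using the general G₂ Ricci formula
`R_{jk} = (∇_i T_{jm} - ∇_j T_{im}) φ_{nkl} g^{mn} g^{il} - T_{jl} g^{li} T_{ik}
 + Tr(T) T_{jk} - T_{jb} T_{ia} g^{il} g^{ap} ψ_{lpqk} g^{bq}`,
with full torsion `T_{ij} = (τ₀/4) g_{ij}` (hence `∇T = 0`, as `τ₀` is constant
and `g` is parallel) and `ψ` antisymmetric. -/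
theorem stmt10 (τ₀ : ℝ)
    (gd : Fin 7 → Fin 7 → ℝ) (hg : ∀ i j, gd i j = if i = j then 1 else 0)
    (φ : Fin 7 → Fin 7 → Fin 7 → ℝ)
    (ψ : Fin 7 → Fin 7 → Fin 7 → Fin 7 → ℝ)
    (hψalt : ∀ l p q k, ψ l p q k = -ψ p l q k)
    (T : Fin 7 → Fin 7 → ℝ) (hT : ∀ i j, T i j = τ₀ / 4 * gd i j)
    -- `∇T`, which vanishes since `τ₀` is constant and `∇g = 0`
    (DT : Fin 7 → Fin 7 → Fin 7 → ℝ) (hDT : ∀ i j m, DT i j m = 0)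
    (Ric : Fin 7 → Fin 7 → ℝ)
    (hRic : ∀ j k, Ric j k =
      (∑ i : Fin 7, ∑ m : Fin 7, (DT i j m - DT j i m) * φ m k i)
        - (∑ l : Fin 7, T j l * T l k) + (∑ i : Fin 7, T i i) * T j k
        - ∑ l : Fin 7, ∑ p : Fin 7, ∑ b : Fin 7, T j b * T l p * ψ l p b k) :
    (∀ j k, Ric j k = 3 / 8 * τ₀ ^ 2 * gd j k) ∧
    (∑ j : Fin 7, Ric j j) = 21 / 8 * τ₀ ^ 2 := by

  have hψ0 : ∀ l q k, ψ l l q k = 0 := fun l q k => by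
    have := hψalt l l q k; linarith
  have hmain : ∀ j k, Ric j k = 3 / 8 * τ₀ ^ 2 * gd j k := by
    intro j k
    rw [hRic]
    have h1 : (∑ i : Fin 7, ∑ m : Fin 7, (DT i j m - DT j i m) * φ m k i) = 0 := by
      simp [hDT]
    have h4 : (∑ l : Fin 7, ∑ p : Fin 7, ∑ b : Fin 7, T j b * T l p * ψ l p b k) = 0 := by
      apply Finset.sum_eq_zero; intro l _
      apply Finset.sum_eq_zero; intro p _
      apply Finset.sum_eq_zero; intro b _
      by_cases hpl : p = l
      · subst hpl; simp [hψ0]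
      · have hlp : l ≠ p := fun h => hpl h.symm
        simp [hT, hg, hlp]
    have h2 : (∑ l : Fin 7, T j l * T l k) = τ₀ / 4 * (τ₀ / 4) * gd j k := by
      rw [Finset.sum_eq_single j (fun b _ hb => by simp [hT, hg, Ne.symm hb])
        (fun h => absurd (Finset.mem_univ j) h)]
      by_cases hjk : j = k <;> simp [hT, hg, hjk] <;> ring
    have h3 : (∑ i : Fin 7, T i i) = 7 * (τ₀ / 4) := by
      simp [hT, hg, Fin.sum_univ_seven]
    rw [h1, h2, h3, h4]
    simp only [hT, hg]
    by_cases hjk : j = k <;> simp [hjk] <;> ring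
  refine ⟨hmain, ?_⟩
  simp [hmain, hg, Fin.sum_univ_seven]
  ring
end

section
/- Pointwise linear-algebraic version of the umbilicity criterion: let (V,g,B) be ℝ^7 with the octonionic cross product, N a unit vector, ξ = B(N,·) on N^⊥, and A a self-adjoint endomorphism of N^⊥. Then the tangential part of B(AX,X) (projection onto N^⊥) vanishes for all X ∈ N^⊥ if and only if A is a multiple of the identity. -/
open RealInnerProductSpace

private lemma stmt17_exists_orth5 {V : Type*} [NormedAddCommGroup V] [InnerProductSpace ℝ V]
    [FiniteDimensional ℝ V] (hdim : 6 ≤ Module.finrank ℝ V)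
    (v1 v2 v3 v4 v5 : V) :
    ∃ Y : V, Y ≠ 0 ∧ ⟪v1, Y⟫ = 0 ∧ ⟪v2, Y⟫ = 0 ∧ ⟪v3, Y⟫ = 0 ∧ ⟪v4, Y⟫ = 0 ∧ ⟪v5, Y⟫ = 0 := by
  set K : Submodule ℝ V := Submodule.span ℝ (Set.range ![v1, v2, v3, v4, v5]) with hK
  have h1 : Module.finrank ℝ K ≤ 5 := by
    have h := finrank_range_le_card (R := ℝ) ![v1, v2, v3, v4, v5]
    simp only [Set.finrank, Fintype.card_fin] at h
    exact h
  have h2 : 0 < Module.finrank ℝ Kᗮ := by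
    have := Submodule.finrank_add_finrank_orthogonal K
    omega
  have h3 : Kᗮ ≠ ⊥ := by
    intro hb
    rw [hb] at h2
    simp at h2
  obtain ⟨Y, hYmem, hY0⟩ := Submodule.exists_mem_ne_zero_of_ne_bot h3
  have hm : ∀ i : Fin 5, ⟪![v1, v2, v3, v4, v5] i, Y⟫ = 0 := fun i =>
    (Submodule.mem_orthogonal K Y).mp hYmem _ (Submodule.subset_span ⟨i, rfl⟩)
  exact ⟨Y, hY0, hm 0, hm 1, hm 2, hm 3, hm 4⟩

/-- Pointwise linear-algebraic version of the umbilicity criterion: let `(V,g,B)` be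
`ℝ⁷` with the octonionic cross product (`B` bilinear, `g(B(u,v),w)` totally
antisymmetric, `B(u,B(u,v)) = -‖u‖²v + g(u,v)u`), `N` a unit vector, and `A` a
self-adjoint endomorphism of `N^⊥` (extended by `A N = 0`).  Then the tangential
part `B(AX,X) - g(B(AX,X),N) N` vanishes for all `X ∈ N^⊥` if and only if `A` is
a multiple of the identity on `N^⊥`. -/
theorem stmt17 {V : Type*} [NormedAddCommGroup V] [InnerProductSpace ℝ V]
    [FiniteDimensional ℝ V] (hdim : Module.finrank ℝ V = 7)
    (B : V →ₗ[ℝ] V →ₗ[ℝ] V)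
    (htot : ∀ u v w : V, ⟪B u v, w⟫ = ⟪B v w, u⟫)
    (halt : ∀ u : V, B u u = 0)
    (hmalcev : ∀ u v : V, B u (B u v) = -(‖u‖ ^ 2) • v + ⟪u, v⟫ • u)
    (N : V) (hN : ‖N‖ = 1)
    (A : V →ₗ[ℝ] V)
    (hAtang : ∀ v : V, ⟪v, N⟫ = 0 → ⟪A v, N⟫ = 0) (hAN : A N = 0)
    (hAsa : ∀ u v : V, ⟪u, N⟫ = 0 → ⟪v, N⟫ = 0 → ⟪A u, v⟫ = ⟪u, A v⟫) :
    (∀ X : V, ⟪X, N⟫ = 0 → B (A X) X - ⟪B (A X) X, N⟫ • N = 0)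
      ↔ (∃ α : ℝ, ∀ X : V, ⟪X, N⟫ = 0 → A X = α • X) := by
  constructor
  · intro h
    -- basic algebraic facts
    have hanti : ∀ u v : V, B u v = - B v u := by
      intro u v
      have h0 := halt (u + v)
      simp only [map_add, LinearMap.add_apply, halt u, halt v, zero_add, add_zero] at h0
      rw [← sub_eq_zero, sub_neg_eq_add, add_comm]
      exact h0
    have horth2 : ∀ u v : V, ⟪B u v, v⟫ = 0 := by
      intro u v
      rw [htot, halt, inner_zero_left]
    have horth1 : ∀ u v : V, ⟪B u v, u⟫ = 0 := by
      intro u v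
      rw [htot]
      exact horth2 v u
    have hpol : ∀ u v w : V, B u (B v w) + B v (B u w)
        = (-(2 * ⟪u, v⟫)) • w + ⟪u, w⟫ • v + ⟪v, w⟫ • u := by
      intro u v w
      have h1 := hmalcev (u + v) w
      have hn : ‖u + v‖ ^ 2 = ‖u‖ ^ 2 + 2 * ⟪u, v⟫ + ‖v‖ ^ 2 := norm_add_sq_real u v
      simp only [map_add, LinearMap.add_apply, inner_add_left, hn] at h1
      rw [hmalcev u w, hmalcev v w] at h1
      linear_combination (norm := module) h1
    have hxixi : ∀ v : V, ⟪v, N⟫ = 0 → B N (B N v) = -v := by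
      intro v hv
      rw [hmalcev N v, hN, show ⟪N, v⟫ = 0 from by rw [real_inner_comm]; exact hv]
      module
    have hinner_xi : ∀ u v : V, ⟪u, N⟫ = 0 → ⟪v, N⟫ = 0 → ⟪B N u, B N v⟫ = ⟪u, v⟫ := by
      intro u v hu hv
      rw [htot N u (B N v), htot u (B N v) N, hanti (B N v) N, hxixi v hv, neg_neg]
      exact real_inner_comm u v
    have hxiN : ∀ v : V, ⟪B N v, N⟫ = 0 := fun v => horth1 N v
    have hnormxi : ∀ X : V, ⟪X, N⟫ = 0 → ‖B N X‖ ^ 2 = ‖X‖ ^ 2 := by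
      intro X hX
      have h1 : ⟪B N X, B N X⟫ = ⟪X, X⟫ := hinner_xi X X hX hX
      rw [real_inner_self_eq_norm_sq, real_inner_self_eq_norm_sq] at h1
      exact h1
    -- Step A: B (A X) X is normal
    have hstepA : ∀ X : V, ⟪X, N⟫ = 0 → B (A X) X = ⟪B (A X) X, N⟫ • N := by
      intro X hX
      have := h X hX
      rwa [sub_eq_zero] at this
    -- Step B: B (A X) (B N X) = ⟪A X, X⟫ • N
    have hstepB : ∀ X : V, ⟪X, N⟫ = 0 → B (A X) (B N X) = ⟪A X, X⟫ • N := by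
      intro X hX
      have hp := hpol N (A X) X
      have h1 : B N (B (A X) X) = 0 := by
        rw [hstepA X hX, map_smul, halt, smul_zero]
      rw [h1, zero_add] at hp
      rw [hp, show ⟪N, A X⟫ = 0 from by rw [real_inner_comm]; exact hAtang X hX,
        show ⟪N, X⟫ = 0 from by rw [real_inner_comm]; exact hX]
      module
    -- Step C: B X (B N X) = ‖X‖² • N
    have hstepC : ∀ X : V, ⟪X, N⟫ = 0 → B X (B N X) = (‖X‖ ^ 2 : ℝ) • N := by
      intro X hX
      have hp := hpol X N X
      rw [halt, map_zero, add_zero] at hp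
      rw [hp, hX, show ⟪N, X⟫ = 0 from by rw [real_inner_comm]; exact hX,
        real_inner_self_eq_norm_sq]
      module
    -- Step D: decomposition A X ∈ span {X, ξ X}
    have hdec : ∀ X : V, ⟪X, N⟫ = 0 →
        (‖X‖ ^ 2 : ℝ) • A X = ⟪A X, X⟫ • X + ⟪B N X, A X⟫ • B N X := by
      intro X hX
      rcases eq_or_ne X 0 with rfl | hX0
      · simp
      have hne : (‖X‖ ^ 2 : ℝ) ≠ 0 := pow_ne_zero 2 (norm_ne_zero_iff.mpr hX0)
      set w : V := (‖X‖ ^ 2 : ℝ) • A X - ⟪A X, X⟫ • X with hw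
      have e1 : B w (B N X) = 0 := by
        rw [hw, map_sub, map_smul, map_smul, LinearMap.sub_apply, LinearMap.smul_apply,
          LinearMap.smul_apply, hstepB X hX, hstepC X hX, smul_smul, smul_smul, mul_comm]
        exact sub_self _
      have e2 : B (B N X) w = 0 := by
        rw [hanti (B N X) w, e1, neg_zero]
      have hm := hmalcev (B N X) w
      rw [e2, map_zero, hnormxi X hX] at hm
      have hiw : ⟪B N X, w⟫ = (‖X‖ ^ 2 : ℝ) * ⟪B N X, A X⟫ := by
        rw [hw, inner_sub_right, real_inner_smul_right, real_inner_smul_right,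
          horth2 N X, mul_zero, sub_zero]
      rw [hiw] at hm
      have e3 : (‖X‖ ^ 2 : ℝ) • w = (‖X‖ ^ 2 : ℝ) • (⟪B N X, A X⟫ • B N X) := by
        linear_combination (norm := module) hm
      have e4 := smul_right_injective V hne e3
      rw [hw] at e4
      exact sub_eq_iff_eq_add'.mp e4
    -- A-orthogonality: ⟪A X, Y⟫ = 0 whenever Y ⊥ X and Y ⊥ ξX
    have hAorth : ∀ X Y : V, ⟪X, N⟫ = 0 → ⟪X, Y⟫ = 0 → ⟪B N X, Y⟫ = 0 → ⟪A X, Y⟫ = 0 := by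
      intro X Y hX hXY hxY
      rcases eq_or_ne X 0 with rfl | hX0
      · simp
      have hne : (‖X‖ ^ 2 : ℝ) ≠ 0 := pow_ne_zero 2 (norm_ne_zero_iff.mpr hX0)
      have e := congrArg (fun v : V => ⟪v, Y⟫) (hdec X hX)
      simp only [inner_add_left, real_inner_smul_left, hXY, hxY, mul_zero, add_zero,
        zero_add] at e
      exact (mul_eq_zero.mp e).resolve_left hne
    -- comparison lemma
    have hYx' : ∀ X Y : V, ⟪B N X, Y⟫ = 0 → ⟪B N Y, X⟫ = 0 := by
      intro X Y hxY
      have : ⟪B N X, Y⟫ = -⟪B N Y, X⟫ := by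
        rw [htot N X Y, htot X Y N, hanti Y N, inner_neg_left]
      rw [this] at hxY
      linarith
    have hcomp : ∀ X Y : V, ⟪X, N⟫ = 0 → ⟪Y, N⟫ = 0 → ⟪X, Y⟫ = 0 → ⟪B N X, Y⟫ = 0 →
        (‖Y‖ ^ 2 : ℝ) * ⟪A X, X⟫ = (‖X‖ ^ 2 : ℝ) * ⟪A Y, Y⟫ ∧
        (‖Y‖ ^ 2 : ℝ) * ⟪B N X, A X⟫ = (‖X‖ ^ 2 : ℝ) * ⟪B N Y, A Y⟫ := by
      intro X Y hX hY hXY hxY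
      have hYX : ⟪Y, X⟫ = 0 := by rw [real_inner_comm]; exact hXY
      have hyX : ⟪B N Y, X⟫ = 0 := hYx' X Y hxY
      have hXN' : ⟪X + Y, N⟫ = 0 := by rw [inner_add_left, hX, hY, add_zero]
      have hAXY : ⟪A X, Y⟫ = 0 := hAorth X Y hX hXY hxY
      have hAYX : ⟪A Y, X⟫ = 0 := hAorth Y X hY hYX hyX
      have hxixiXY : ⟪B N X, B N Y⟫ = ⟪X, Y⟫ := hinner_xi X Y hX hY
      have hxixiYX : ⟪B N Y, B N X⟫ = ⟪Y, X⟫ := hinner_xi Y X hY hX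
      have hAXxiY : ⟪A X, B N Y⟫ = 0 := by
        refine hAorth X (B N Y) hX ?_ ?_
        · rw [real_inner_comm]; exact hyX
        · rw [hxixiXY]; exact hXY
      have hAYxiX : ⟪A Y, B N X⟫ = 0 := by
        refine hAorth Y (B N X) hY ?_ ?_
        · rw [real_inner_comm]; exact hxY
        · rw [hxixiYX]; exact hYX
      have hns : ‖X + Y‖ ^ 2 = ‖X‖ ^ 2 + ‖Y‖ ^ 2 := by
        rw [norm_add_sq_real, hXY]; ring
      have hd := hdec (X + Y) hXN'
      constructor
      · have e := congrArg (fun v : V => ⟪v, X⟫) hd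
        simp only [map_add, inner_add_left, inner_add_right, real_inner_smul_left] at e
        rw [hns] at e
        rw [real_inner_self_eq_norm_sq X, hAYX, hYX, hAXY,
          show ⟪B N X, X⟫ = 0 from horth2 N X, hyX] at e
        -- e : (‖X‖²+‖Y‖²) * (⟪A X,X⟫ + 0) = (⟪A X,X⟫+⟪A X,Y⟫+(⟪A Y,X⟫+⟪A Y,Y⟫)) * ...
        linear_combination e
      · have e := congrArg (fun v : V => ⟪v, B N X⟫) hd
        simp only [map_add, inner_add_left, inner_add_right, real_inner_smul_left] at e
        rw [hns] at e
        rw [hAYxiX, show ⟪X, B N X⟫ = 0 from by rw [real_inner_comm]; exact horth2 N X,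
          show ⟪Y, B N X⟫ = 0 from by rw [real_inner_comm]; exact hxY,
          show ⟪B N X, B N X⟫ = ‖X‖ ^ 2 from by
            rw [hinner_xi X X hX hX, real_inner_self_eq_norm_sq],
          hxixiYX, hYX] at e
        have z0 : ⟪A X, B N X⟫ = ⟪B N X, A X⟫ := real_inner_comm (B N X) (A X)
        have z1 : ⟪B N X, A Y⟫ = 0 := by rw [real_inner_comm]; exact hAYxiX
        have z2 : ⟪B N Y, A X⟫ = 0 := by rw [real_inner_comm]; exact hAXxiY
        rw [z0, z1, z2] at e
        linear_combination e
    -- b ≡ 0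
    have hb0 : ∀ X : V, ⟪X, N⟫ = 0 → ⟪B N X, A X⟫ = 0 := by
      intro X hX
      rcases eq_or_ne X 0 with rfl | hX0
      · simp
      obtain ⟨Y, hY0, o1, o2, o3, _, _⟩ :=
        stmt17_exists_orth5 (by omega : 6 ≤ Module.finrank ℝ V) N X (B N X) 0 0
      have hYN : ⟪Y, N⟫ = 0 := by rw [real_inner_comm]; exact o1
      have hXY : ⟪X, Y⟫ = 0 := o2
      have hxY : ⟪B N X, Y⟫ = 0 := o3
      have hYne : (‖Y‖ ^ 2 : ℝ) ≠ 0 := pow_ne_zero 2 (norm_ne_zero_iff.mpr hY0)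
      have hxiXN : ⟪B N X, N⟫ = 0 := hxiN X
      have h1 := (hcomp X Y hX hYN hXY hxY).2
      -- second: pair (ξX, Y)
      have hxixY : ⟪B N (B N X), Y⟫ = 0 := by
        rw [hxixi X hX, inner_neg_left, hXY, neg_zero]
      have h2 := (hcomp (B N X) Y hxiXN hYN hxY hxixY).2
      rw [hnormxi X hX] at h2
      -- LHS of h2: ⟪B N (B N X), A (B N X)⟫ = -⟪X, A (B N X)⟫ = -⟪A X, B N X⟫
      have h3 : ⟪B N (B N X), A (B N X)⟫ = -⟪B N X, A X⟫ := by
        rw [hxixi X hX, inner_neg_left, ← hAsa X (B N X) hX hxiXN, real_inner_comm]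
      rw [h3] at h2
      -- h1 : ‖Y‖² ⟪ξX, AX⟫ = ‖X‖² ⟪ξY, AY⟫ ; h2 : -‖Y‖² ⟪ξX,AX⟫ = ‖X‖² ⟪ξY,AY⟫
      have : (‖Y‖ ^ 2 : ℝ) * ⟪B N X, A X⟫ = 0 := by linarith
      exact (mul_eq_zero.mp this).resolve_left hYne
    -- pick reference vector X₀
    obtain ⟨X₀, hX₀0, p1, _, _, _, _⟩ :=
      stmt17_exists_orth5 (by omega : 6 ≤ Module.finrank ℝ V) N 0 0 0 0
    have hX₀N : ⟪X₀, N⟫ = 0 := by rw [real_inner_comm]; exact p1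
    have hX₀ne : (‖X₀‖ ^ 2 : ℝ) ≠ 0 := pow_ne_zero 2 (norm_ne_zero_iff.mpr hX₀0)
    refine ⟨⟪A X₀, X₀⟫ / ‖X₀‖ ^ 2, ?_⟩
    intro X hX
    rcases eq_or_ne X 0 with rfl | hX0
    · simp
    have hXne : (‖X‖ ^ 2 : ℝ) ≠ 0 := pow_ne_zero 2 (norm_ne_zero_iff.mpr hX0)
    obtain ⟨Y, hY0, q1, q2, q3, q4, q5⟩ :=
      stmt17_exists_orth5 (by omega : 6 ≤ Module.finrank ℝ V) N X (B N X) X₀ (B N X₀)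
    have hYN : ⟪Y, N⟫ = 0 := by rw [real_inner_comm]; exact q1
    have hYne : (‖Y‖ ^ 2 : ℝ) ≠ 0 := pow_ne_zero 2 (norm_ne_zero_iff.mpr hY0)
    have h1 := (hcomp X Y hX hYN q2 q3).1
    have h2 := (hcomp X₀ Y hX₀N hYN q4 q5).1
    -- deduce ⟪A X, X⟫ * ‖X₀‖² = ⟪A X₀, X₀⟫ * ‖X‖²
    have h3 : (‖Y‖ ^ 2 : ℝ) * (⟪A X, X⟫ * ‖X₀‖ ^ 2) = (‖Y‖ ^ 2 : ℝ) * (⟪A X₀, X₀⟫ * ‖X‖ ^ 2) := by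
      linear_combination (‖X₀‖ ^ 2 : ℝ) * h1 - (‖X‖ ^ 2 : ℝ) * h2
    have h4 := mul_left_cancel₀ hYne h3
    have h5 : ⟪A X, X⟫ = ⟪A X₀, X₀⟫ / ‖X₀‖ ^ 2 * ‖X‖ ^ 2 := by
      field_simp
      linarith
    have h6 := hdec X hX
    rw [hb0 X hX, zero_smul, add_zero, h5] at h6
    have h7 : (‖X‖ ^ 2 : ℝ) • A X = (‖X‖ ^ 2 : ℝ) • ((⟪A X₀, X₀⟫ / ‖X₀‖ ^ 2) • X) := by
      rw [h6, smul_smul, mul_comm]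
    exact smul_right_injective V hXne h7
  · rintro ⟨α, hα⟩ X hX
    rw [hα X hX, map_smul, LinearMap.smul_apply, halt, smul_zero, inner_zero_left,
      zero_smul, sub_zero]
end

section
/- Let M be an oriented minimal hypersurface of a nearly G₂ manifold (M̄,φ) with unit normal N and induced almost complex structure ξ(X) = B(N,X). Then div ξ = 0, i.e., for each point p and each v ∈ T_pM, Σᵢ g((∇_{eᵢ}ξ)(v), eᵢ) = 0 for an orthonormal frame {e₁,…,e₆} of T_pM. (In fact no minimality is needed: the computation only uses self-adjointness of A and antisymmetry of φ.) -/
open RealInnerProductSpace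

/-- Let `M` be an oriented hypersurface of a nearly G₂ manifold `(M̄, φ)` with unit
normal `N`, shape operator `A`, and `ξ(X) = B(N,X)`.  Then `div ξ = 0`: at each
point `p`, for every orthonormal frame `{e₁,…,e₆}` of `T_pM` and every tangent
field `v`, `Σᵢ g((∇_{eᵢ} ξ)(v), eᵢ) = 0`.  (Minimality of `M` is not needed: the
computation only uses self-adjointness of `A`, total skewness of `G = ∇̄B`, and
that `φ(a,b,c) = ḡ(B(a,b),c)` is a 3-form.)

Ambient vector fields along `M` are maps `P → V` (orthonormal trivialization);
`D` is the induced connection; `(∇_X ξ)(Y) = D_X(ξY) - ξ(D_X Y)` is computed by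
`(∇_X ξ)(Y) = G(X,N,Y) - φ(N,Y,AX)N - B(AX,Y)`. -/
theorem stmt18 {P V : Type*} [NormedAddCommGroup V] [InnerProductSpace ℝ V]
    (B : P → V → V → V) (φ : P → V → V → V → ℝ)
    (N : P → V) (hN : ∀ p, ‖N p‖ = 1)
    (D : (P → V) → (P → V) → (P → V))
    (A : (P → V) → (P → V))
    (G : (P → V) → (P → V) → (P → V) → (P → V))
    -- φ is the cross-product 3-form
    (hφ : ∀ (p : P) (x y z : V), φ p x y z = ⟪B p x y, z⟫)
    (hφalt : ∀ (p : P) (x y z : V),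
      φ p x y z = -φ p y x z ∧ φ p x y z = -φ p x z y)
    -- G is totally skew-symmetric, as a 4-form via the metric
    (hGskew : ∀ (X Y Z : P → V) (p : P), ⟪G X Y Z p, X p⟫ = 0)
    -- A is tangent-valued and self-adjoint
    (hAtang : ∀ X : P → V, (∀ p, ⟪X p, N p⟫ = 0) → ∀ p, ⟪A X p, N p⟫ = 0)
    (hAsa : ∀ X Y : P → V, (∀ p, ⟪X p, N p⟫ = 0) → (∀ p, ⟪Y p, N p⟫ = 0) →
      ∀ p, ⟪A X p, Y p⟫ = ⟪X p, A Y p⟫)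
    -- the formula (∇_X ξ)(Y) = G(X,N,Y) - φ(N,Y,AX)N - B(AX,Y) on tangent fields
    (hxi : ∀ X Y : P → V, (∀ p, ⟪X p, N p⟫ = 0) → (∀ p, ⟪Y p, N p⟫ = 0) →
      ∀ p : P,
        D X (fun q => B q (N q) (Y q)) p - B p (N p) (D X Y p) =
          G X N Y p - φ p (N p) (Y p) (A X p) • N p - B p (A X p) (Y p)) :
    -- conclusion: div ξ = 0
    ∀ (p : P) (e : Fin 6 → P → V), (∀ i, ∀ q, ⟪e i q, N q⟫ = 0) →
      (∀ i j, ⟪e i p, e j p⟫ = if i = j then 1 else 0) →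
      (∀ w : V, ⟪w, N p⟫ = 0 → w ∈ Submodule.span ℝ (Set.range fun i => e i p)) →
      ∀ v : P → V, (∀ q, ⟪v q, N q⟫ = 0) →
        (∑ i : Fin 6,
          ⟪D (e i) (fun q => B q (N q) (v q)) p - B p (N p) (D (e i) v p),
            e i p⟫) = 0 := by
  intro p e htang horth hspan v hv
  -- full antisymmetry of φ: swap first and third arguments
  have hφ13 : ∀ (x y z : V), φ p x y z = -φ p z y x := by
    intro x y z
    rw [(hφalt p x y z).1, (hφalt p y x z).2, (hφalt p y z x).1]
    ring
  -- expansion of a tangent vector in the orthonormal frame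
  have key : ∀ x : V, ⟪x, N p⟫ = 0 → x = ∑ j, ⟪x, e j p⟫ • e j p := by
    intro x hx
    obtain ⟨c, hc⟩ := (Finsupp.mem_span_range_iff_exists_finsupp).1 (hspan x hx)
    have hc' : x = ∑ j, c j • e j p := by
      rw [← hc, Finsupp.sum_fintype]
      intro i; exact zero_smul ℝ _
    have hcoef : ∀ k, ⟪x, e k p⟫ = c k := by
      intro k
      rw [hc', sum_inner]
      simp [real_inner_smul_left, horth]
    have : ∑ j, ⟪x, e j p⟫ • e j p = ∑ j, c j • e j p :=
      Finset.sum_congr rfl (fun j _ => by rw [hcoef])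
    rw [this, ← hc']
  -- reduce each summand
  have hterm : ∀ i, ⟪D (e i) (fun q => B q (N q) (v q)) p - B p (N p) (D (e i) v p),
      e i p⟫ = -⟪B p (A (e i) p) (v p), e i p⟫ := by
    intro i
    rw [hxi (e i) v (htang i) hv p]
    have h1 : ⟪G (e i) N v p, e i p⟫ = 0 := hGskew _ _ _ p
    have h2 : ⟪N p, e i p⟫ = 0 := by rw [real_inner_comm]; exact htang i p
    rw [inner_sub_left, inner_sub_left, real_inner_smul_left, h1, h2]
    ring
  have hswap : ∀ i, ⟪B p (A (e i) p) (v p), e i p⟫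
      = -⟪B p (e i p) (v p), A (e i) p⟫ := by
    intro i
    rw [← hφ, ← hφ, hφ13]
  simp only [hterm, hswap]
  -- expand A(e i) p in the frame
  have hA : ∀ i, A (e i) p = ∑ j, ⟪A (e i) p, e j p⟫ • e j p :=
    fun i => key _ (hAtang (e i) (htang i) p)
  have expand : ∀ i, ⟪B p (e i p) (v p), A (e i) p⟫
      = ∑ j, ⟪A (e i) p, e j p⟫ * ⟪B p (e i p) (v p), e j p⟫ := by
    intro i
    conv_lhs => rw [hA i]
    rw [inner_sum]
    exact Finset.sum_congr rfl (fun j _ => by rw [real_inner_smul_right])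
  simp only [neg_neg, expand]
  -- antisymmetric × symmetric vanishes
  set a : Fin 6 → Fin 6 → ℝ := fun i j => ⟪A (e i) p, e j p⟫ with ha
  set c : Fin 6 → Fin 6 → ℝ := fun i j => ⟪B p (e i p) (v p), e j p⟫ with hcdef
  have hasym : ∀ i j, a i j = a j i := by
    intro i j
    simp only [ha]
    rw [hAsa (e i) (e j) (htang i) (htang j) p, real_inner_comm]
  have hcasym : ∀ i j, c i j = -c j i := by
    intro i j
    simp only [hcdef]
    rw [← hφ, ← hφ, hφ13]
  have : (∑ i, ∑ j, a i j * c i j) = -(∑ i, ∑ j, a i j * c i j) := by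
    conv_lhs => rw [Finset.sum_comm]
    rw [← Finset.sum_neg_distrib]
    refine Finset.sum_congr rfl (fun i _ => ?_)
    rw [← Finset.sum_neg_distrib]
    refine Finset.sum_congr rfl (fun j _ => ?_)
    rw [hasym j i, hcasym j i]; ring
  linarith
end
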